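/- arXiv:2310.15438 — 2 statements merged into one kernel-verified Lean document; each statement's English description precedes it below -/
import Mathlib

section
/- For every coin sequence, every starting position i ∈ {1,…,n} and every t ∈ ℕ, setting x = H_S(i) − T_S(i) (the Heads-minus-Tails count among coins used while card i is in the bottom part during the first t steps) and y = H_B(i) − T_B(i) (the Heads-minus-Tails count among coins used while card i is in position m during the first t steps), one has ‖p(i_t) − p(i) − (t − ⌊t/(2n)⌋·(m−1) − x − ⌊y·(1 − m/(2n))⌋·m)‖ ≤ |y|/2 + (|x|/(2n))·(√n + 1) + 4·√n. -/
open scoped Classical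

/-- One step of the overlapping cycles shuffle acting on positions `1,…,n`
    (`coin = true` means Heads). -/
def ocsStep (n m x : ℕ) (coin : Bool) : ℕ :=
  if x < m then x + 1
  else if x = m then (if coin then 1 else m + 1)
  else if x < n then (if coin then x else x + 1)
  else if coin then x else 1

/-- Position after `t` steps of the card initially at position `i`,
    using coin sequence `c` (0-indexed: step `r+1` uses coin `c r`). -/
def ocsPos (n m : ℕ) (c : ℕ → Bool) (i : ℕ) : ℕ → ℕ
  | 0 => i
  | t + 1 => ocsStep n m (ocsPos n m c i t) (c t)
/-- `p(x) = x` for `x ≤ m` and `p(x) = 2x − m` for `x > m`. -/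
def pval (m x : ℕ) : ℤ := if x ≤ m then (x : ℤ) else 2 * x - m
/-- Number of Heads used, among the first `t` steps, while card `i` is in position `m`. -/
def HB (n m : ℕ) (c : ℕ → Bool) (i t : ℕ) : ℕ :=
  ((Finset.range t).filter (fun r => ocsPos n m c i r = m ∧ c r = true)).card

/-- Number of Tails used, among the first `t` steps, while card `i` is in position `m`. -/
def TB (n m : ℕ) (c : ℕ → Bool) (i t : ℕ) : ℕ :=
  ((Finset.range t).filter (fun r => ocsPos n m c i r = m ∧ c r = false)).card

/-- Number of Heads used, among the first `t` steps, while card `i` is in the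
    bottom part `{m+1,…,n}` of the deck. -/
def HS (n m : ℕ) (c : ℕ → Bool) (i t : ℕ) : ℕ :=
  ((Finset.range t).filter (fun r =>
    m + 1 ≤ ocsPos n m c i r ∧ ocsPos n m c i r ≤ n ∧ c r = true)).card

/-- Number of Tails used, among the first `t` steps, while card `i` is in the
    bottom part `{m+1,…,n}` of the deck. -/
def TS (n m : ℕ) (c : ℕ → Bool) (i t : ℕ) : ℕ :=
  ((Finset.range t).filter (fun r =>
    m + 1 ≤ ocsPos n m c i r ∧ ocsPos n m c i r ≤ n ∧ c r = false)).card
/-- `‖z‖ = min { |a| + |b|·√n : a, b ∈ ℤ, z ≡ a + b·m (mod 2n−m+1) }`. -/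
noncomputable def knorm (n m : ℕ) (z : ℤ) : ℝ :=
  sInf {r : ℝ | ∃ a b : ℤ,
    z ≡ a + b * m [ZMOD ((2 * n - m + 1 : ℕ) : ℤ)] ∧ r = |a| + |b| * Real.sqrt n}


lemma count_succ (P : ℕ → Prop) [DecidablePred P] (t : ℕ) :
    ((Finset.range (t+1)).filter P).card
      = ((Finset.range t).filter P).card + (if P t then 1 else 0) := by
  rw [Finset.range_add_one, Finset.filter_insert]
  split
  · rw [Finset.card_insert_of_notMem (by simp)]
  · simp

lemma ocs_range (n m : ℕ) (hm : 2 ≤ m) (hmn : m ≤ n - 1) (c : ℕ → Bool) (i : ℕ)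
    (hi : 1 ≤ i) (hin : i ≤ n) :
    ∀ t, 1 ≤ ocsPos n m c i t ∧ ocsPos n m c i t ≤ n := by
  intro t
  induction t with
  | zero => exact ⟨hi, hin⟩
  | succ t ih =>
    have h : ocsPos n m c i (t+1) = ocsStep n m (ocsPos n m c i t) (c t) := rfl
    rw [h]; unfold ocsStep; split_ifs <;> omega

lemma knorm_le (n m : ℕ) (z a b : ℤ)
    (h : z ≡ a + b * m [ZMOD ((2 * n - m + 1 : ℕ) : ℤ)]) :
    knorm n m z ≤ (|a| : ℤ) + (|b| : ℤ) * Real.sqrt n := by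
  apply csInf_le
  · refine ⟨0, ?_⟩
    rintro r ⟨a', b', -, rfl⟩
    positivity
  · exact ⟨a, b, h, rfl⟩

def ocsU (n m v : ℕ) : ℤ := if v ≤ m then (v:ℤ) - 1 else (v:ℤ) - n - 1
def ocsV (n m v : ℕ) : ℤ := if v ≤ m then 0 else (v:ℤ) - n - 1

lemma ocs_inv (n m : ℕ) (hm : 2 ≤ m) (hmn : m ≤ n - 1) (c : ℕ → Bool) (i : ℕ)
    (hi : 1 ≤ i) (hin : i ≤ n) (t : ℕ) :
    ((t : ℤ) = m * HB n m c i t + n * TB n m c i t + HS n m c i t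
        + ocsU n m (ocsPos n m c i t) - ocsU n m i) ∧
    ((TS n m c i t : ℤ) = ((n:ℤ) - m) * TB n m c i t
        + ocsV n m (ocsPos n m c i t) - ocsV n m i) ∧
    ∃ E : ℤ, pval m (ocsPos n m c i t) - pval m i
        = (t:ℤ) - m * HB n m c i t + TB n m c i t - HS n m c i t + TS n m c i t
          - (2*(n:ℤ) - m + 1) * E := by
  have hn : 3 ≤ n := by omega
  induction t with
  | zero =>
    refine ⟨by simp [HB, TB, HS, ocsPos], by simp [TS, TB, ocsPos], 0,
      by simp [HB, TB, HS, TS, ocsPos]⟩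
  | succ t ih =>
    obtain ⟨hII, hIII, E, hIV⟩ := ih
    obtain ⟨h1, h2⟩ := ocs_range n m hm hmn c i hi hin t
    have hstep : ocsPos n m c i (t+1) = ocsStep n m (ocsPos n m c i t) (c t) := rfl
    have hHB : (HB n m c i (t+1) : ℤ) = HB n m c i t
        + (if (ocsPos n m c i t = m ∧ c t = true) then 1 else 0) := by
      unfold HB; rw [count_succ]; push_cast; ring
    have hTB : (TB n m c i (t+1) : ℤ) = TB n m c i t
        + (if (ocsPos n m c i t = m ∧ c t = false) then 1 else 0) := by
      unfold TB; rw [count_succ]; push_cast; ring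
    have hHS : (HS n m c i (t+1) : ℤ) = HS n m c i t
        + (if (m + 1 ≤ ocsPos n m c i t ∧ ocsPos n m c i t ≤ n ∧ c t = true) then 1 else 0) := by
      unfold HS; rw [count_succ]; push_cast; ring
    have hTS : (TS n m c i (t+1) : ℤ) = TS n m c i t
        + (if (m + 1 ≤ ocsPos n m c i t ∧ ocsPos n m c i t ≤ n ∧ c t = false) then 1 else 0) := by
      unfold TS; rw [count_succ]; push_cast; ring
    rcases Nat.lt_or_ge (ocsPos n m c i t) m with hvm | hvm
    · -- top, below m
      have hne : ¬ (ocsPos n m c i t = m) := by omega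
      have hnb : ¬ (m + 1 ≤ ocsPos n m c i t) := by omega
      have hstep' : ocsPos n m c i (t+1) = ocsPos n m c i t + 1 := by
        rw [hstep]; simp [ocsStep, hvm]
      simp only [hstep', hHB, hTB, hHS, hTS, hne, hnb, false_and, if_false, add_zero]
      have hu : ocsU n m (ocsPos n m c i t + 1) = ocsU n m (ocsPos n m c i t) + 1 := by
        simp only [ocsU, if_pos (show ocsPos n m c i t + 1 ≤ m by omega),
          if_pos (show ocsPos n m c i t ≤ m by omega)]; push_cast; ring
      have hv : ocsV n m (ocsPos n m c i t + 1) = ocsV n m (ocsPos n m c i t) := by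
        simp only [ocsV, if_pos (show ocsPos n m c i t + 1 ≤ m by omega),
          if_pos (show ocsPos n m c i t ≤ m by omega)]
      have hp : pval m (ocsPos n m c i t + 1) = pval m (ocsPos n m c i t) + 1 := by
        simp only [pval, if_pos (show ocsPos n m c i t + 1 ≤ m by omega),
          if_pos (show ocsPos n m c i t ≤ m by omega)]; push_cast; ring
      refine ⟨?_, ?_, E, ?_⟩
      · rw [hu]; push_cast; linear_combination hII
      · rw [hv]; exact hIII
      · rw [hp]; push_cast; linear_combination hIV
    · rcases eq_or_lt_of_le hvm with hveq | hvgt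
      · -- at position m
        have hveq' : ocsPos n m c i t = m := hveq.symm
        rw [hveq'] at hII hIII hIV
        have hum : ocsU n m m = (m:ℤ) - 1 := by simp [ocsU]
        have hu1 : ocsU n m (m+1) = (m:ℤ) - n := by
          simp only [ocsU, if_neg (show ¬ (m + 1 ≤ m) by omega)]; push_cast; ring
        have hum1 : ocsU n m 1 = 0 := by simp [ocsU, show 1 ≤ m by omega]
        have hvm' : ocsV n m m = 0 := by simp [ocsV]
        have hv1 : ocsV n m (m+1) = (m:ℤ) - n := by
          simp only [ocsV, if_neg (show ¬ (m + 1 ≤ m) by omega)]; push_cast; ring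
        have hvm1 : ocsV n m 1 = 0 := by simp [ocsV, show 1 ≤ m by omega]
        have hpm : pval m m = (m:ℤ) := by simp [pval]
        have hp2 : pval m (m+1) = (m:ℤ) + 2 := by
          simp only [pval, if_neg (show ¬ (m + 1 ≤ m) by omega)]; push_cast; ring
        have hp1 : pval m 1 = 1 := by simp [pval, show 1 ≤ m by omega]
        rw [hum] at hII; rw [hvm'] at hIII; rw [hpm] at hIV
        cases hct : c t
        · -- tails at m : go to m+1
          have hstep' : ocsPos n m c i (t+1) = m + 1 := by
            rw [hstep, hveq']; simp [ocsStep, hct]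
          simp only [hstep', hHB, hTB, hHS, hTS, hveq', hct,
            show ¬ (m + 1 ≤ m) by omega, Bool.false_eq_true, and_false, false_and,
            if_false, add_zero, and_true, and_self, if_true, if_pos rfl]
          refine ⟨?_, ?_, E, ?_⟩
          · rw [hu1]; push_cast; linear_combination hII
          · rw [hv1]; push_cast; linear_combination hIII
          · rw [hp2]; push_cast; linear_combination hIV
        · -- heads at m : go to 1
          have hstep' : ocsPos n m c i (t+1) = 1 := by
            rw [hstep, hveq']; simp [ocsStep, hct]
          simp only [hstep', hHB, hTB, hHS, hTS, hveq', hct,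
            show ¬ (m + 1 ≤ m) by omega, Bool.true_eq_false, and_false, false_and,
            if_false, add_zero, and_true, and_self, if_true, if_pos rfl]
          refine ⟨?_, ?_, E, ?_⟩
          · rw [hum1]; push_cast; linear_combination hII
          · rw [hvm1]; push_cast; linear_combination hIII
          · rw [hp1]; push_cast; linear_combination hIV
      · -- bottom part
        have hne : ¬ (ocsPos n m c i t = m) := by omega
        have hb : m + 1 ≤ ocsPos n m c i t := hvgt
        have hnu : ¬ (ocsPos n m c i t ≤ m) := by omega
        rcases Nat.lt_or_ge (ocsPos n m c i t) n with hvn | hvn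
        · -- strictly inside bottom
          cases hct : c t
          · -- tails : move down
            have hstep' : ocsPos n m c i (t+1) = ocsPos n m c i t + 1 := by
              rw [hstep]; simp [ocsStep, hct, hne, hvn, Nat.not_lt.mpr hvm]
            simp only [hstep', hHB, hTB, hHS, hTS, hne, hct, Bool.false_eq_true,
              and_false, false_and, if_false, add_zero, and_true, and_self, true_and,
              hb, h2]
            have hu : ocsU n m (ocsPos n m c i t + 1) = ocsU n m (ocsPos n m c i t) + 1 := by
              simp only [ocsU, if_neg (show ¬ (ocsPos n m c i t + 1 ≤ m) by omega), if_neg hnu]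
              push_cast; ring
            have hv : ocsV n m (ocsPos n m c i t + 1) = ocsV n m (ocsPos n m c i t) + 1 := by
              simp only [ocsV, if_neg (show ¬ (ocsPos n m c i t + 1 ≤ m) by omega), if_neg hnu]
              push_cast; ring
            have hp : pval m (ocsPos n m c i t + 1) = pval m (ocsPos n m c i t) + 2 := by
              simp only [pval, if_neg (show ¬ (ocsPos n m c i t + 1 ≤ m) by omega), if_neg hnu]
              push_cast; ring
            refine ⟨?_, ?_, E, ?_⟩
            · rw [hu]; push_cast; linear_combination hII
            · rw [hv]; push_cast; linear_combination hIII
            · rw [hp]; push_cast; linear_combination hIV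
          · -- heads : stay
            have hstep' : ocsPos n m c i (t+1) = ocsPos n m c i t := by
              rw [hstep]; simp [ocsStep, hct, hne, hvn, Nat.not_lt.mpr hvm]
            simp only [hstep', hHB, hTB, hHS, hTS, hne, hct, Bool.true_eq_false,
              and_false, false_and, if_false, add_zero, and_true, and_self, true_and,
              hb, h2]
            refine ⟨?_, ?_, E, ?_⟩
            · push_cast; linear_combination hII
            · push_cast; linear_combination hIII
            · push_cast; linear_combination hIV
        · -- at position n
          have hveqn : ocsPos n m c i t = n := by omega
          rw [hveqn] at hII hIII hIV
          have hnm : ¬ (n ≤ m) := by omega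
          have hun : ocsU n m n = (n:ℤ) - n - 1 := by simp only [ocsU, if_neg hnm]
          have hu1 : ocsU n m 1 = 0 := by simp [ocsU, show 1 ≤ m by omega]
          have hvnn : ocsV n m n = (n:ℤ) - n - 1 := by simp only [ocsV, if_neg hnm]
          have hv1 : ocsV n m 1 = 0 := by simp [ocsV, show 1 ≤ m by omega]
          have hpn : pval m n = 2*(n:ℤ) - m := by simp only [pval, if_neg hnm]
          have hp1 : pval m 1 = 1 := by simp [pval, show 1 ≤ m by omega]
          rw [hun] at hII; rw [hvnn] at hIII; rw [hpn] at hIV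
          cases hct : c t
          · -- tails : back to 1
            have hstep' : ocsPos n m c i (t+1) = 1 := by
              rw [hstep, hveqn]; simp [ocsStep, hct, show ¬ (n < m) by omega,
                show ¬ (n = m) by omega]
            simp only [hstep', hHB, hTB, hHS, hTS, hveqn, hct, Bool.false_eq_true, show ¬ (n = m) by omega,
              and_false, false_and, if_false, add_zero, and_true, and_self, true_and,
              show m + 1 ≤ n by omega, le_refl]
            refine ⟨?_, ?_, E + 1, ?_⟩
            · rw [hu1]; push_cast; linear_combination hII
            · rw [hv1]; push_cast; linear_combination hIII
            · rw [hp1]; push_cast; linear_combination hIV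
          · -- heads : stay at n
            have hstep' : ocsPos n m c i (t+1) = n := by
              rw [hstep, hveqn]; simp [ocsStep, hct, show ¬ (n < m) by omega,
                show ¬ (n = m) by omega]
            simp only [hstep', hHB, hTB, hHS, hTS, hveqn, hct, Bool.true_eq_false, show ¬ (n = m) by omega,
              and_false, false_and, if_false, add_zero, and_true, and_self, true_and,
              show m + 1 ≤ n by omega, le_refl]
            rw [hun, hvnn, hpn]
            refine ⟨?_, ?_, E, ?_⟩
            · push_cast; linear_combination hII
            · push_cast; linear_combination hIII
            · push_cast; linear_combination hIV

lemma ocsW_range (n m v : ℕ) (hm : 2 ≤ m) (hmn : m ≤ n - 1) (h1 : 1 ≤ v) (h2 : v ≤ n) :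
    2*(m:ℤ) - 2*n ≤ ocsU n m v + ocsV n m v ∧ ocsU n m v + ocsV n m v ≤ (m:ℤ) - 1 := by
  simp only [ocsU, ocsV]; split_ifs <;> constructor <;> omega

set_option maxHeartbeats 1000000 in
/-- With `x = H_S(i) − T_S(i)` and `y = H_B(i) − T_B(i)` over the
first `t` steps,
`‖p(i_t) − p(i) − (t − ⌊t/(2n)⌋·(m−1) − x − ⌊y·(1 − m/(2n))⌋·m)‖
  ≤ |y|/2 + (|x|/(2n))·(√n + 1) + 4√n`. -/
theorem movement_bounds (n m : ℕ) (hm : 2 ≤ m) (hmn : m ≤ n - 1)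
    (c : ℕ → Bool) (i : ℕ) (hi : 1 ≤ i) (hin : i ≤ n) (t : ℕ) :
    knorm n m
        (pval m (ocsPos n m c i t) - pval m i -
          ((t : ℤ) - ((t / (2 * n) : ℕ) : ℤ) * ((m : ℤ) - 1)
            - ((HS n m c i t : ℤ) - (TS n m c i t : ℤ))
            - (⌊(((HB n m c i t : ℤ) - (TB n m c i t : ℤ)) : ℝ)
                  * (1 - (m : ℝ) / (2 * (n : ℝ)))⌋) * (m : ℤ))) ≤
      |(((HB n m c i t : ℤ) - (TB n m c i t : ℤ)) : ℝ)| / 2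
        + |(((HS n m c i t : ℤ) - (TS n m c i t : ℤ)) : ℝ)| / (2 * (n : ℝ))
            * (Real.sqrt n + 1)
        + 4 * Real.sqrt n := by
  have hn : 3 ≤ n := by omega
  obtain ⟨hII, hIII, E, hIV⟩ := ocs_inv n m hm hmn c i hi hin t
  obtain ⟨h1, h2⟩ := ocs_range n m hm hmn c i hi hin t
  -- names
  set P := ocsPos n m c i t with hP
  set Bh := HB n m c i t with hBh
  set Bt := TB n m c i t with hBt
  set Sh := HS n m c i t with hSh
  set St := TS n m c i t with hSt
  set q := t / (2 * n) with hq
  set yZ : ℤ := (Bh : ℤ) - (Bt : ℤ) with hy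
  set xZ : ℤ := (Sh : ℤ) - (St : ℤ) with hx
  set yR : ℝ := ((Bh : ℤ) : ℝ) - ((Bt : ℤ) : ℝ) with hyRd
  set xR : ℝ := ((Sh : ℤ) : ℝ) - ((St : ℤ) : ℝ) with hxRd
  set fZ : ℤ := ⌊yR * (1 - (m : ℝ) / (2 * (n : ℝ)))⌋ with hf
  set aZ : ℤ := (Bt : ℤ) - (q : ℤ) with ha
  set bZ : ℤ := (q : ℤ) + fZ - (Bh : ℤ) with hb
  have hN : ((2 * n - m + 1 : ℕ) : ℤ) = 2*(n:ℤ) - m + 1 := by omega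
  have hmod : (pval m P - pval m i -
          ((t : ℤ) - (q : ℤ) * ((m : ℤ) - 1) - xZ - fZ * (m : ℤ)))
        ≡ aZ + bZ * m [ZMOD ((2 * n - m + 1 : ℕ) : ℤ)] := by
    refine Int.modEq_iff_dvd.mpr ⟨E, ?_⟩
    rw [hN, ha, hb, hx]
    linear_combination -hIV
  have hle := knorm_le n m _ aZ bZ hmod
  refine le_trans hle ?_
  -- real abbreviations
  have h2n : (0:ℝ) < 2 * (n:ℝ) := by positivity
  have hm0 : (0:ℝ) ≤ (m:ℝ) := by positivity
  have hm2R : (2:ℝ) ≤ (m:ℝ) := by exact_mod_cast hm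
  have hmnR : (m:ℝ) ≤ (n:ℝ) := by exact_mod_cast (by omega : m ≤ n)
  have hyR : yR = ((yZ : ℤ) : ℝ) := by rw [hyRd, hy]; push_cast; ring
  have hxR : xR = ((xZ : ℤ) : ℝ) := by rw [hxRd, hx]; push_cast; ring
  set s := Real.sqrt n with hsdef
  have hs : (0:ℝ) ≤ s := Real.sqrt_nonneg _
  have hss : s * s = (n:ℝ) := Real.mul_self_sqrt (by positivity)
  -- the exact integer identity for aZ
  have e1 : 2*(n:ℤ)*aZ = -(xZ + (m:ℤ)*yZ + ((ocsU n m P + ocsV n m P) - (ocsU n m i + ocsV n m i)))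
      + ((t:ℤ) - 2*(n:ℤ)*(q:ℤ)) := by
    rw [ha, hx, hy]; linear_combination -hII - hIII
  have e2 : bZ = fZ - yZ - aZ := by rw [hb, ha, hy]; ring
  -- w bounds
  obtain ⟨hw1, hw2⟩ := ocsW_range n m P hm hmn h1 h2
  obtain ⟨hw3, hw4⟩ := ocsW_range n m i hm hmn hi hin
  -- real casts
  have e1R : 2*(n:ℝ)*(aZ:ℝ) = -((xZ:ℝ) + (m:ℝ)*(yZ:ℝ)
        + (((ocsU n m P + ocsV n m P : ℤ):ℝ) - ((ocsU n m i + ocsV n m i : ℤ):ℝ)))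
      + ((t:ℝ) - 2*(n:ℝ)*((q:ℕ):ℝ)) := by exact_mod_cast e1
  have e2R : (bZ:ℝ) = (fZ:ℝ) - (yZ:ℝ) - (aZ:ℝ) := by exact_mod_cast e2
  have hw1R : 2*(m:ℝ) - 2*(n:ℝ) ≤ ((ocsU n m P + ocsV n m P : ℤ):ℝ) := by exact_mod_cast hw1
  have hw2R : ((ocsU n m P + ocsV n m P : ℤ):ℝ) ≤ (m:ℝ) - 1 := by exact_mod_cast hw2
  have hw3R : 2*(m:ℝ) - 2*(n:ℝ) ≤ ((ocsU n m i + ocsV n m i : ℤ):ℝ) := by exact_mod_cast hw3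
  have hw4R : ((ocsU n m i + ocsV n m i : ℤ):ℝ) ≤ (m:ℝ) - 1 := by exact_mod_cast hw4
  -- division / floor bounds
  have hdiv := Nat.div_add_mod t (2*n)
  have hmlt : t % (2*n) < 2*n := Nat.mod_lt _ (by omega)
  have htq1 : 0 ≤ (t:ℝ) - 2*(n:ℝ)*((q:ℕ):ℝ) := by
    have : (t:ℝ) = 2*(n:ℝ)*((q:ℕ):ℝ) + ((t % (2*n) : ℕ):ℝ) := by
      rw [hq]; exact_mod_cast hdiv.symm
    rw [this]
    have hr0 : (0:ℝ) ≤ ((t % (2*n) : ℕ):ℝ) := by positivity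
    linarith
  have htq2 : (t:ℝ) - 2*(n:ℝ)*((q:ℕ):ℝ) < 2*(n:ℝ) := by
    have h' : (t:ℝ) = 2*(n:ℝ)*((q:ℕ):ℝ) + ((t % (2*n) : ℕ):ℝ) := by
      rw [hq]; exact_mod_cast hdiv.symm
    have h'' : ((t % (2*n) : ℕ):ℝ) < 2*(n:ℝ) := by exact_mod_cast hmlt
    linarith
  have hfl : (fZ:ℝ) ≤ (yZ:ℝ) * (1 - (m:ℝ)/(2*(n:ℝ))) := by
    rw [← hyR]; exact (hf ▸ Int.floor_le _)
  have hfu : (yZ:ℝ) * (1 - (m:ℝ)/(2*(n:ℝ))) < (fZ:ℝ) + 1 := by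
    rw [← hyR]
    exact_mod_cast (hf ▸ Int.lt_floor_add_one (yR * (1 - (m:ℝ)/(2*(n:ℝ)))))
  have hid : 2*(n:ℝ)*((yZ:ℝ)*(1 - (m:ℝ)/(2*(n:ℝ)))) = 2*(n:ℝ)*(yZ:ℝ) - (m:ℝ)*(yZ:ℝ) := by
    field_simp
  -- abs facts
  have hax1 := le_abs_self ((xZ:ℝ)); have hax2 := neg_abs_le ((xZ:ℝ))
  have hmyabs : |(m:ℝ)*(yZ:ℝ)| = (m:ℝ)*|(yZ:ℝ)| := by rw [abs_mul, abs_of_nonneg hm0]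
  have hay1 := le_abs_self ((m:ℝ)*(yZ:ℝ)); have hay2 := neg_abs_le ((m:ℝ)*(yZ:ℝ))
  rw [hmyabs] at hay1 hay2
  -- bound on 2n|a|
  have haA : 2*(n:ℝ)*|(aZ:ℝ)| ≤ |(xZ:ℝ)| + (m:ℝ)*|(yZ:ℝ)| + (2*(n:ℝ) - m - 1) + 2*(n:ℝ) := by
    have habs : |2*(n:ℝ)*(aZ:ℝ)| = 2*(n:ℝ)*|(aZ:ℝ)| := by
      rw [abs_mul, abs_of_pos h2n]
    rw [← habs]
    rw [abs_le]; constructor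
    · rw [e1R]; linarith
    · rw [e1R]; linarith
  -- bound on 2n|b|
  have hbB : 2*(n:ℝ)*|(bZ:ℝ)| ≤ |(xZ:ℝ)| + (2*(n:ℝ) - m - 1) + 4*(n:ℝ) := by
    have habs : |2*(n:ℝ)*(bZ:ℝ)| = 2*(n:ℝ)*|(bZ:ℝ)| := by
      rw [abs_mul, abs_of_pos h2n]
    have hfl2 : 2*(n:ℝ)*(fZ:ℝ) ≤ 2*(n:ℝ)*(yZ:ℝ) - (m:ℝ)*(yZ:ℝ) := by
      have := mul_le_mul_of_nonneg_left hfl (le_of_lt h2n)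
      rw [hid] at this; linarith
    have hfu2 : 2*(n:ℝ)*(yZ:ℝ) - (m:ℝ)*(yZ:ℝ) - 2*(n:ℝ) < 2*(n:ℝ)*(fZ:ℝ) := by
      have := mul_lt_mul_of_pos_left hfu h2n
      rw [hid] at this; linarith
    have hb2 : 2*(n:ℝ)*(bZ:ℝ) = 2*(n:ℝ)*(fZ:ℝ) - 2*(n:ℝ)*(yZ:ℝ) - 2*(n:ℝ)*(aZ:ℝ) := by
      rw [e2R]; ring
    rw [← habs, abs_le]; constructor
    · rw [hb2, e1R]; linarith
    · rw [hb2, e1R]; linarith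
  -- key polynomial inequality
  have hsss : s*s*s = (n:ℝ)*s := by rw [hss]
  have key : (2*(n:ℝ) - m - 1)*(1+s) + 2*(n:ℝ) ≤ 4*(n:ℝ)*s := by
    nlinarith [mul_nonneg hs (sq_nonneg (s-1)), mul_nonneg (by linarith : (0:ℝ) ≤ (m:ℝ) - 2)
      (by linarith : (0:ℝ) ≤ 1 + s), hss, hsss]
  have hmyny : (m:ℝ)*|(yZ:ℝ)| ≤ (n:ℝ)*|(yZ:ℝ)| :=
    mul_le_mul_of_nonneg_right hmnR (abs_nonneg _)
  have hbBs : 2*(n:ℝ)*|(bZ:ℝ)| *s ≤ (|(xZ:ℝ)| + (2*(n:ℝ) - m - 1) + 4*(n:ℝ))*s :=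
    mul_le_mul_of_nonneg_right hbB hs
  -- final assembly
  have hRHSeq : |(yZ:ℝ)|/2 + |(xZ:ℝ)|/(2*(n:ℝ))*(s+1) + 4*s
      = ((n:ℝ)*|(yZ:ℝ)| + |(xZ:ℝ)| *(s+1) + 8*(n:ℝ)*s)/(2*(n:ℝ)) := by
    field_simp; ring
  push_cast
  rw [hyR, hxR, hRHSeq, le_div_iff₀ h2n]
  nlinarith [haA, hbBs, key, hmyny, hs, abs_nonneg ((xZ:ℝ)), abs_nonneg ((bZ:ℝ))]
end

section
/- Let φ = (√5 − 1)/2 be the inverse golden ratio. For every N ∈ ℕ and every real x ∈ [0,1], there exist k ∈ {0, 1, …, N} and an integer j such that |x − (k·φ − j)| ≤ (1/(2φ²))·(1/(N+1)). -/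
open scoped Classical

/-- The inverse golden ratio `φ = (√5 − 1)/2`. -/
noncomputable def invGolden : ℝ := (Real.sqrt 5 - 1) / 2

lemma invGolden_pos : 0 < invGolden := by
  have h5 : Real.sqrt 5 ^ 2 = 5 := Real.sq_sqrt (by norm_num)
  have h0 : 0 ≤ Real.sqrt 5 := Real.sqrt_nonneg 5
  unfold invGolden
  nlinarith

lemma invGolden_lt_one : invGolden < 1 := by
  have h5 : Real.sqrt 5 ^ 2 = 5 := Real.sq_sqrt (by norm_num)
  have h0 : 0 ≤ Real.sqrt 5 := Real.sqrt_nonneg 5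
  unfold invGolden
  nlinarith

lemma invGolden_sq : invGolden ^ 2 = 1 - invGolden := by
  have h5 : Real.sqrt 5 ^ 2 = 5 := Real.sq_sqrt (by norm_num)
  unfold invGolden
  nlinarith

lemma two_invGolden_ge_one : 1 ≤ 2 * invGolden := by
  have h5 : Real.sqrt 5 ^ 2 = 5 := Real.sq_sqrt (by norm_num)
  have h0 : 0 ≤ Real.sqrt 5 := Real.sqrt_nonneg 5
  unfold invGolden
  nlinarith

/-- Key identity: `fib(n+1)·φ − fib(n) = (−1)ⁿ·φ^(n+1)`. -/
lemma fib_invGolden (n : ℕ) :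
    (Nat.fib (n+1) : ℝ) * invGolden - (Nat.fib n : ℝ) = (-1)^n * invGolden^(n+1) := by
  induction n using Nat.twoStepInduction with
  | zero => simp
  | one =>
      have h2 : Nat.fib 2 = 1 := rfl
      have h1 : Nat.fib 1 = 1 := rfl
      rw [h2, h1]
      push_cast
      have := invGolden_sq
      nlinarith
  | more n ih1 ih2 =>
      show (Nat.fib (n+3) : ℝ) * invGolden - (Nat.fib (n+2) : ℝ)
          = (-1)^(n+2) * invGolden^(n+3)
      have hrec1 : (Nat.fib (n+3) : ℝ) = Nat.fib (n+1) + Nat.fib (n+2) := by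
        have h : Nat.fib (n+3) = Nat.fib (n+1) + Nat.fib (n+2) := Nat.fib_add_two
        exact_mod_cast h
      have hrec2 : (Nat.fib (n+2) : ℝ) = Nat.fib n + Nat.fib (n+1) := by
        have h : Nat.fib (n+2) = Nat.fib n + Nat.fib (n+1) := Nat.fib_add_two
        exact_mod_cast h
      have e : (Nat.fib (n+3) : ℝ) * invGolden - (Nat.fib (n+2) : ℝ)
          = ((Nat.fib (n+2) : ℝ) * invGolden - Nat.fib (n+1))
            + ((Nat.fib (n+1) : ℝ) * invGolden - Nat.fib n) := by
        rw [hrec1, hrec2]; ring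
      rw [e, ih2, ih1]
      have h1 : (-1:ℝ)^(n+1) = -(-1)^n := by ring
      have h2 : (-1:ℝ)^(n+2) = (-1)^n := by ring
      rw [h1, h2]
      have h3 : invGolden ^ (n+3) = invGolden^(n+1) * invGolden^2 := by ring
      have h4 : invGolden ^ (n+2) = invGolden^(n+1) * invGolden := by ring
      rw [h3, h4, invGolden_sq]
      ring

/-- `fib(n+1)·φⁿ ≤ 1`. -/
lemma fib_mul_pow_le_one (n : ℕ) : (Nat.fib (n+1) : ℝ) * invGolden ^ n ≤ 1 := by
  induction n using Nat.twoStepInduction with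
  | zero => simp
  | one =>
      have h2 : Nat.fib 2 = 1 := rfl
      rw [h2]
      push_cast
      have := invGolden_lt_one
      nlinarith
  | more n ih1 ih2 =>
      show (Nat.fib (n+3) : ℝ) * invGolden ^ (n+2) ≤ 1
      have hrec : (Nat.fib (n+3) : ℝ) = Nat.fib (n+1) + Nat.fib (n+2) := by
        have h : Nat.fib (n+3) = Nat.fib (n+1) + Nat.fib (n+2) := Nat.fib_add_two
        exact_mod_cast h
      have hp : 0 < invGolden := invGolden_pos
      have hpn : 0 < invGolden ^ n := pow_pos hp n
      have h1 : (Nat.fib (n+2) : ℝ) * invGolden ^ (n+2) ≤ invGolden := by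
        have e1 : (Nat.fib (n+2) : ℝ) * invGolden ^ (n+2)
            = ((Nat.fib (n+2) : ℝ) * invGolden ^ (n+1)) * invGolden := by ring
        rw [e1]
        calc ((Nat.fib (n+2) : ℝ) * invGolden ^ (n+1)) * invGolden
            ≤ 1 * invGolden := mul_le_mul_of_nonneg_right ih2 hp.le
          _ = invGolden := by ring
      have h2 : (Nat.fib (n+1) : ℝ) * invGolden ^ (n+2) ≤ invGolden ^ 2 := by
        have e2 : (Nat.fib (n+1) : ℝ) * invGolden ^ (n+2)
            = ((Nat.fib (n+1) : ℝ) * invGolden ^ n) * invGolden ^ 2 := by ring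
        rw [e2]
        calc ((Nat.fib (n+1) : ℝ) * invGolden ^ n) * invGolden ^ 2
            ≤ 1 * invGolden ^ 2 := mul_le_mul_of_nonneg_right ih1 (by positivity)
          _ = invGolden ^ 2 := by ring
      calc (Nat.fib (n+3) : ℝ) * invGolden ^ (n+2)
          = (Nat.fib (n+2) : ℝ) * invGolden ^ (n+2)
            + (Nat.fib (n+1) : ℝ) * invGolden ^ (n+2) := by rw [hrec]; ring
        _ ≤ invGolden + invGolden ^ 2 := add_le_add h1 h2
        _ = 1 := by rw [invGolden_sq]; ring

/-- Covering lemma: for every `x` there are `k < fib (n+2)` and `j ∈ ℤ`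
with `kφ − j ∈ [x, x + φⁿ]`. -/
lemma invGolden_cover (n : ℕ) : ∀ x : ℝ, ∃ k : ℕ, k < Nat.fib (n+2) ∧ ∃ j : ℤ,
    x ≤ (k:ℝ) * invGolden - (j:ℝ) ∧ (k:ℝ) * invGolden - (j:ℝ) ≤ x + invGolden ^ n := by
  induction n with
  | zero =>
      intro x
      refine ⟨0, by norm_num [Nat.fib], -⌈x⌉, ?_, ?_⟩
      · push_cast
        have := Int.le_ceil x
        simpa using this
      · push_cast
        have := (Int.ceil_lt_add_one x).le
        simpa using this
  | succ n ih =>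
      intro x
      have hp : 0 < invGolden := invGolden_pos
      have hpn : 0 < invGolden ^ n := pow_pos hp n
      have hsq := invGolden_sq
      have hshift := fib_invGolden n
      have hF : Nat.fib (n+1+2) = Nat.fib (n+1) + Nat.fib (n+2) := Nat.fib_add_two
      have hfibpos : 0 < Nat.fib (n+1) := Nat.fib_pos.mpr (Nat.succ_pos n)
      have hpow : invGolden^(n+1) = invGolden^n * invGolden := pow_succ _ _
      have h3 : invGolden^n ≤ 2 * invGolden^(n+1) := by
        have hmul : (0:ℝ) ≤ invGolden^n * (2 * invGolden - 1) :=
          mul_nonneg hpn.le (by linarith [two_invGolden_ge_one])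
        nlinarith
      rcases Nat.even_or_odd n with hev | hodd
      · -- n even: shift is +φ^(n+1); apply ih at x + φ^(n+1) − φⁿ
        have hsign : (-1:ℝ)^n = 1 := hev.neg_one_pow
        rw [hsign, one_mul] at hshift
        obtain ⟨k', hk', j', h1, h2⟩ := ih (x + invGolden^(n+1) - invGolden^n)
        by_cases hcase : x ≤ (k':ℝ) * invGolden - (j':ℝ)
        · exact ⟨k', by omega, j', hcase, by linarith⟩
        · push_neg at hcase
          refine ⟨k' + Nat.fib (n+1), by omega, j' + (Nat.fib n : ℤ), ?_, ?_⟩ <;>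
          · have hpt : ((↑(k' + Nat.fib (n+1)) : ℝ)) * invGolden - ((↑(j' + (Nat.fib n : ℤ)) : ℤ) : ℝ)
                = ((k':ℝ) * invGolden - (j':ℝ))
                  + ((Nat.fib (n+1) : ℝ) * invGolden - (Nat.fib n : ℝ)) := by
              push_cast; ring
            rw [hshift] at hpt
            push_cast [hpt]
            push_cast at hpt
            linarith
      · -- n odd: shift is −φ^(n+1); apply ih at x
        have hsign : (-1:ℝ)^n = -1 := hodd.neg_one_pow
        rw [hsign, neg_one_mul] at hshift
        obtain ⟨k', hk', j', h1, h2⟩ := ih x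
        by_cases hcase : (k':ℝ) * invGolden - (j':ℝ) ≤ x + invGolden^(n+1)
        · exact ⟨k', by omega, j', h1, hcase⟩
        · push_neg at hcase
          refine ⟨k' + Nat.fib (n+1), by omega, j' + (Nat.fib n : ℤ), ?_, ?_⟩ <;>
          · have hpt : ((↑(k' + Nat.fib (n+1)) : ℝ)) * invGolden - ((↑(j' + (Nat.fib n : ℤ)) : ℤ) : ℝ)
                = ((k':ℝ) * invGolden - (j':ℝ))
                  + ((Nat.fib (n+1) : ℝ) * invGolden - (Nat.fib n : ℝ)) := by
              push_cast; ring
            rw [hshift] at hpt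
            push_cast [hpt]
            push_cast at hpt
            linarith

lemma succ_le_fib_add_two (n : ℕ) : n + 1 ≤ Nat.fib (n+2) := by
  induction n with
  | zero => norm_num [Nat.fib]
  | succ n ih =>
      show n + 2 ≤ Nat.fib (n+3)
      have hF : Nat.fib (n+3) = Nat.fib (n+1) + Nat.fib (n+2) := Nat.fib_add_two
      have h1 : 0 < Nat.fib (n+1) := Nat.fib_pos.mpr (Nat.succ_pos n)
      omega

/-- For every `N ∈ ℕ` and every `x ∈ [0,1]` there are
`k ∈ {0,…,N}` and `j ∈ ℤ` with `|x − (kφ − j)| ≤ (1/(2φ²))·(1/(N+1))`,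
where `φ = (√5 − 1)/2`. -/
theorem golden_ratio_uniform (N : ℕ) (x : ℝ) (hx0 : 0 ≤ x) (hx1 : x ≤ 1) :
    ∃ k : ℕ, k ≤ N ∧ ∃ j : ℤ,
      |x - ((k : ℝ) * invGolden - (j : ℝ))| ≤
        (1 / (2 * invGolden ^ 2)) * (1 / ((N : ℝ) + 1)) := by
  classical
  set P : ℕ → Prop := fun n => Nat.fib (n+2) ≤ N + 1 with hP
  have hP0 : P 0 := by simp [hP, Nat.fib]
  set n := Nat.findGreatest P N with hn
  have hn_spec : P n := Nat.findGreatest_spec (Nat.zero_le N) hP0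
  have hn_spec' : Nat.fib (n+2) ≤ N + 1 := hn_spec
  have hupper : N + 1 < Nat.fib (n+3) := by
    rcases eq_or_lt_of_le (Nat.findGreatest_le (P := P) N) with heq | hlt
    · have h2 : N + 2 ≤ Nat.fib (N+3) := succ_le_fib_add_two (N+1)
      rw [hn, heq]
      omega
    · have hnp : ¬ P (n+1) :=
        Nat.findGreatest_is_greatest (Nat.lt_succ_self n) hlt
      have hnp' : ¬ (Nat.fib (n+3) ≤ N + 1) := hnp
      omega
  obtain ⟨k, hk, j, h1, h2⟩ := invGolden_cover n (x - invGolden ^ n / 2)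
  have hkN : k ≤ N := by omega
  refine ⟨k, hkN, j, ?_⟩
  have hp : 0 < invGolden := invGolden_pos
  have hpn : 0 < invGolden ^ n := pow_pos hp n
  have habs : |x - ((k : ℝ) * invGolden - (j : ℝ))| ≤ invGolden ^ n / 2 := by
    rw [abs_le]
    constructor <;> linarith
  refine le_trans habs ?_
  have hfib : (Nat.fib (n+3) : ℝ) * invGolden ^ (n+2) ≤ 1 := fib_mul_pow_le_one (n+2)
  have hNfib : ((N:ℝ) + 1) ≤ (Nat.fib (n+3) : ℝ) := by
    have h : N + 1 ≤ Nat.fib (n+3) := le_of_lt hupper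
    exact_mod_cast h
  have hpn2 : 0 < invGolden ^ (n+2) := pow_pos hp _
  have hkey : ((N:ℝ) + 1) * invGolden ^ (n+2) ≤ 1 :=
    le_trans (mul_le_mul_of_nonneg_right hNfib hpn2.le) hfib
  have hN1 : (0:ℝ) < (N:ℝ) + 1 := by positivity
  rw [div_mul_div_comm, one_mul]
  rw [le_div_iff₀ (by positivity)]
  have e : invGolden ^ n / 2 * (2 * invGolden ^ 2 * ((N:ℝ)+1))
      = ((N:ℝ) + 1) * invGolden ^ (n+2) := by ring
  rw [e]
  exact hkey
end
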